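/- In the Šarkovskiĭ order on positive natural numbers, the set of elements that are not powers of 2, ordered by ≺, has order type ω² (it is a well-order isomorphic to ω·ω), while the set of powers of 2 ordered by ≺ has order type ω*; in particular the whole Šarkovskiĭ order has a greatest element, namely 1. -/

import Mathlib

/-- The odd part of `n`: the `m` in the unique decomposition `n = 2^a · m`
with `m` odd (for `n > 0`). -/
def oddPart (n : ℕ) : ℕ := n / 2 ^ padicValNat 2 n

/-- The Šarkovskiĭ-type order on positive naturals. -/
def sharLt (n n' : ℕ) : Prop :=
  (1 < oddPart n ∧ 1 < oddPart n' ∧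
    (padicValNat 2 n < padicValNat 2 n' ∨
      (padicValNat 2 n = padicValNat 2 n' ∧ oddPart n < oddPart n'))) ∨
  (1 < oddPart n ∧ oddPart n' = 1) ∨
  (oddPart n = 1 ∧ oddPart n' = 1 ∧ padicValNat 2 n' < padicValNat 2 n)

/-!
Writing `n = 2^a · m` with `m` odd, the map `n ↦ (a, (m - 3) / 2)` is an isomorphism from the
non-powers of 2 onto `ℕ × ℕ` ordered lexicographically, whose order type is `ω · ω`, and
`2^a ↦ a` reverses the order on the powers of 2. The element `1 = 2^0` is the last power of 2,
and every non-power of 2 precedes every power of 2.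
-/

namespace Ordinal

universe u v

theorem nonempty_relIso_lt_of_lift_type_eq {α : Type v} {r : α → α → Prop} [IsWellOrder α r]
    {o : Ordinal.{u}} (h : lift.{u} (type r) = lift.{v} o) :
    Nonempty (r ≃r ((· < ·) : {x : Ordinal.{u} // x < o} →
      {x : Ordinal.{u} // x < o} → Prop)) := by
  rw [← lift_type_eq.{v, u + 1, u + 1}]
  change _ = lift (typeLT (Set.Iio o))
  simpa [type_lt_Iio] using congrArg lift.{u + 1} h

theorem type_lex_nat_lt :
    type (Prod.Lex ((· < ·) : ℕ → ℕ → Prop) ((· < ·) : ℕ → ℕ → Prop)) =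
      ω ^ 2 := by
  rw [type_prod_lex, type_nat_lt, sq]

end Ordinal

lemma two_pow_padicValNat_mul_oddPart (n : ℕ) : 2 ^ padicValNat 2 n * oddPart n = n := by
  simpa [oddPart, Nat.factorization_def n Nat.prime_two] using Nat.ordProj_mul_ordCompl_eq_self n 2

lemma not_two_dvd_oddPart {n : ℕ} (hn : 0 < n) : ¬ 2 ∣ oddPart n := by
  simpa [oddPart, Nat.factorization_def n Nat.prime_two] using
    Nat.not_dvd_ordCompl Nat.prime_two hn.ne'

lemma padicValNat_two_pow_mul (a : ℕ) {m : ℕ} (hm : ¬ 2 ∣ m) :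
    padicValNat 2 (2 ^ a * m) = a := by
  rw [padicValNat.mul (by positivity) (by rintro rfl; exact hm (dvd_zero 2)),
    padicValNat.prime_pow, padicValNat.eq_zero_of_not_dvd hm, add_zero]

lemma oddPart_two_pow_mul (a : ℕ) {m : ℕ} (hm : ¬ 2 ∣ m) : oddPart (2 ^ a * m) = m := by
  rw [oddPart, padicValNat_two_pow_mul a hm, Nat.mul_div_cancel_left _ (by positivity)]

lemma oddPart_one : oddPart 1 = 1 := by
  simpa using oddPart_two_pow_mul 0 (m := 1) (by decide)

def nonPowTwoRelIso :
    (fun x y : {n : ℕ // 0 < n ∧ 1 < oddPart n} => sharLt x.1 y.1) ≃r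
      Prod.Lex ((· < ·) : ℕ → ℕ → Prop) ((· < ·) : ℕ → ℕ → Prop) where
  toFun n := (padicValNat 2 n, (oddPart n - 3) / 2)
  invFun p := ⟨2 ^ p.1 * (2 * p.2 + 3), by positivity, by
    rw [oddPart_two_pow_mul _ (by omega)]; omega⟩
  left_inv := by
    rintro ⟨n, hn, hodd⟩
    have : 2 * ((oddPart n - 3) / 2) + 3 = oddPart n := by
      have := not_two_dvd_oddPart hn; omega
    simp only [this, two_pow_padicValNat_mul_oddPart]
  right_inv p := by
    have hm : ¬ 2 ∣ 2 * p.2 + 3 := by omega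
    simp [padicValNat_two_pow_mul _ hm, oddPart_two_pow_mul _ hm]
  map_rel_iff' {x y} := by
    obtain ⟨n, hn, hodd⟩ := x
    obtain ⟨n', hn', hodd'⟩ := y
    have hm := not_two_dvd_oddPart hn
    have hm' := not_two_dvd_oddPart hn'
    simp only [Equiv.coe_fn_mk, Prod.lex_iff, sharLt]
    omega

def powTwoRelIso :
    (fun x y : {n : ℕ // 0 < n ∧ oddPart n = 1} => sharLt x.1 y.1) ≃r
      (fun a b : ℕ => b < a) where
  toFun n := padicValNat 2 n
  invFun a := ⟨2 ^ a, by positivity, by simpa using oddPart_two_pow_mul a (m := 1) (by decide)⟩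
  left_inv := by
    rintro ⟨n, hn, hodd⟩
    have := two_pow_padicValNat_mul_oddPart n
    rw [hodd, mul_one] at this
    simp [this]
  right_inv a := by simp
  map_rel_iff' {x y} := by
    obtain ⟨n, hn, hodd⟩ := x
    obtain ⟨n', hn', hodd'⟩ := y
    simp [sharLt, hodd, hodd']

lemma sharLt_one {n : ℕ} (hn : 0 < n) (hn1 : n ≠ 1) : sharLt n 1 := by
  have hdecomp := two_pow_padicValNat_mul_oddPart n
  have hodd := not_two_dvd_oddPart hn
  by_cases h : 1 < oddPart n
  · exact Or.inr (Or.inl ⟨h, oddPart_one⟩)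
  · have hodd1 : oddPart n = 1 := by omega
    refine Or.inr (Or.inr ⟨hodd1, oddPart_one, ?_⟩)
    rw [padicValNat_one_right, Nat.pos_iff_ne_zero]
    intro hv
    rw [hv, hodd1] at hdecomp
    exact hn1 hdecomp.symm

/-- In the Šarkovskiĭ order: the non-powers of 2 (positive `n` with odd part
`> 1`) have order type ω², the powers of 2 (positive `n` with odd part `1`)
have order type ω*, and `1` is the greatest element. -/
theorem stmt_19 :
    Nonempty ((fun x y : {n : ℕ // 0 < n ∧ 1 < oddPart n} => sharLt x.1 y.1) ≃r
      ((· < ·) : {o : Ordinal // o < Ordinal.omega0 ^ 2} →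
        {o : Ordinal // o < Ordinal.omega0 ^ 2} → Prop)) ∧
    Nonempty ((fun x y : {n : ℕ // 0 < n ∧ oddPart n = 1} => sharLt x.1 y.1) ≃r
      (fun a b : ℕ => b < a)) ∧
    (∀ n : ℕ, 0 < n → n ≠ 1 → sharLt n 1) := by
  refine ⟨?_, ⟨powTwoRelIso⟩, fun _ => sharLt_one⟩
  refine ⟨nonPowTwoRelIso.trans (Ordinal.nonempty_relIso_lt_of_lift_type_eq ?_).some⟩
  rw [Ordinal.type_lex_nat_lt]
  simp [sq]
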